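/- arXiv:2101.11947 — 4 statements merged into one kernel-verified Lean document; each statement's English description precedes it below -/
import Mathlib

section
/- Let k ≥ 1 and n ≥ d ≥ 1 be integers with k ≥ 2^(n−d−1). Then f(n,k,d) = 2^d·k − ⌊k / 2^(n−d)⌋. -/
open scoped Classical

noncomputable section

abbrev F2 : Type := ZMod 2

/-- Number of members of the multiset `H` (counted with multiplicity) containing `x`. -/
def covCount (n : ℕ) (H : Multiset (AffineSubspace F2 (Fin n → F2))) (x : Fin n → F2) : ℕ :=
  Multiset.countP (fun S => x ∈ S) H

/-- `H` is a (k,d)-cover of 𝔽₂ⁿ: a multiset of (n-d)-dimensional affine subspaces covering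
every nonzero point at least `k` times and the origin at most `k-1` times. -/
def IsCover (n k d : ℕ) (H : Multiset (AffineSubspace F2 (Fin n → F2))) : Prop :=
  (∀ S ∈ H, (S : Set (Fin n → F2)).Nonempty ∧ Module.finrank F2 S.direction = n - d) ∧
  (∀ x : Fin n → F2, x ≠ 0 → k ≤ covCount n H x) ∧
  covCount n H 0 < k

/-- `H` is a (k,d;s)-cover of 𝔽₂ⁿ: a (k,d)-cover in which the origin lies in exactly `s`
members (counted with multiplicity). -/
def IsCoverExact (n k d s : ℕ) (H : Multiset (AffineSubspace F2 (Fin n → F2))) : Prop :=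
  (∀ S ∈ H, (S : Set (Fin n → F2)).Nonempty ∧ Module.finrank F2 S.direction = n - d) ∧
  (∀ x : Fin n → F2, x ≠ 0 → k ≤ covCount n H x) ∧
  covCount n H 0 = s

/-- Minimum cardinality of a (k,d)-cover of 𝔽₂ⁿ. -/
def f (n k d : ℕ) : ℕ := sInf {m | ∃ H, IsCover n k d H ∧ Multiset.card H = m}

/-- Minimum cardinality of a (k,d;s)-cover of 𝔽₂ⁿ. -/
def g (n k d s : ℕ) : ℕ := sInf {m | ∃ H, IsCoverExact n k d s H ∧ Multiset.card H = m}

end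

/-!
Lower bound: a member of `H` has `2^(n-d)` points and each of the `2^n - 1` nonzero points is
covered `k` times, so `|H| ≥ ⌈(2^n - 1) k / 2^(n-d)⌉ = 2^d k - ⌊k / 2^(n-d)⌋`.

Upper bound: split `𝔽₂ⁿ ≅ 𝔽₂^(d-1) × 𝔽₂^L` with `L = n - d + 1`, `x ↦ (u, v)`. Taking `k` copies
of every coset `{u = u₀, w₀ ⬝ᵥ v = b}` with `u₀ ≠ 0` covers the points off the slice `u = 0`
exactly `k` times, at a cost of `(2^d - 2) k`. On the slice the problem becomes the case `d = 1`,
solved with hyperplanes `{w ⬝ᵥ v = 1}`, which miss the origin, and pairs of parallel hyperplanes,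
which meet every point once: for `k ≥ 2^(L-1)` take `⌊k / 2^(L-1)⌋` copies of all `2^L - 1` of
the former, otherwise the `2^(L-1)` of them with `w ⬝ᵥ 1 = 1`, which cover each nonzero point at
least `2^(L-2)` times; pairs make up the rest.
-/

open Finset Matrix

section Fiber

variable {K V W : Type*} [Field K] [AddCommGroup V] [Module K V] [AddCommGroup W] [Module K W]

def fiber (φ : V →ₗ[K] W) (c : W) : AffineSubspace K V where
  carrier := φ ⁻¹' {c}
  smul_vsub_vadd_mem' t p₁ p₂ p₃ h₁ h₂ h₃ := by
    simp_all [vsub_eq_sub, vadd_eq_add]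

theorem mem_fiber {φ : V →ₗ[K] W} {c : W} {x : V} : x ∈ fiber φ c ↔ φ x = c := Iff.rfl

theorem fiber_nonempty {φ : V →ₗ[K] W} (hφ : Function.Surjective φ) (c : W) :
    (fiber φ c : Set V).Nonempty :=
  hφ c

theorem direction_fiber {φ : V →ₗ[K] W} {c : W} {x : V} (hx : φ x = c) :
    (fiber φ c).direction = LinearMap.ker φ := by
  have : fiber φ c = AffineSubspace.mk' x (LinearMap.ker φ) := by
    ext y
    simp [AffineSubspace.mem_mk', mem_fiber, vsub_eq_sub, hx, sub_eq_zero]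
  rw [this, AffineSubspace.direction_mk']

theorem finrank_direction_fiber [FiniteDimensional K V] {φ : V →ₗ[K] W}
    (hφ : Function.Surjective φ) (c : W) :
    Module.finrank K (fiber φ c).direction = Module.finrank K V - Module.finrank K W := by
  obtain ⟨x, hx⟩ := hφ c
  rw [direction_fiber hx, ← LinearMap.finrank_range_add_finrank_ker φ,
    LinearMap.range_eq_top.mpr hφ, finrank_top, Nat.add_sub_cancel_left]

theorem AffineSubspace.natCard_eq_pow_finrank [Finite K] [FiniteDimensional K V]
    (S : AffineSubspace K V) (hS : (S : Set V).Nonempty) :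
    Nat.card S = Nat.card K ^ Module.finrank K S.direction := by
  have : Nonempty S := hS.to_subtype
  rw [← Nat.card_congr (Equiv.vaddConst (Classical.arbitrary S)),
    Module.natCard_eq_pow_finrank (K := K)]

theorem card_filter_apply_eq_of_surjective [Fintype K] [Fintype V] [FiniteDimensional K V]
    [DecidableEq W] {φ : V →ₗ[K] W} (hφ : Function.Surjective φ) (c : W) :
    #{x | φ x = c} = Fintype.card K ^ (Module.finrank K V - Module.finrank K W) := by
  rw [← finrank_direction_fiber hφ c, ← Nat.card_eq_fintype_card,
    ← (fiber φ c).natCard_eq_pow_finrank (fiber_nonempty hφ c), Nat.card_eq_fintype_card,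
    Fintype.card_subtype]
  simp only [mem_fiber]

end Fiber

theorem card_filter_mulVec_eq {K m n : Type*} [Field K] [Fintype K] [Fintype m] [Fintype n]
    [DecidableEq n] {A : Matrix m n K} (hA : LinearIndependent K A.row) (c : m → K) :
    #{w | A *ᵥ w = c} = Fintype.card K ^ (Fintype.card n - Fintype.card m) := by
  have hsurj : Function.Surjective A.mulVecLin := by
    refine LinearMap.range_eq_top.mp (Submodule.eq_top_of_finrank_eq ?_)
    rw [← Matrix.rank, hA.rank_matrix, Module.finrank_fintype_fun_eq_card]
  have h := card_filter_apply_eq_of_surjective hsurj c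
  simp only [Matrix.mulVecLin_apply, Module.finrank_fintype_fun_eq_card] at h
  exact h

theorem card_dotProduct_eq_one {L : ℕ} {v : Fin L → F2} (hv : v ≠ 0) :
    #{w | w ⬝ᵥ v = 1} = 2 ^ (L - 1) := by
  have hA : LinearIndependent F2 (Matrix.of ![v]).row := by
    rw [linearIndependent_unique_iff]
    simpa using hv
  have h := card_filter_mulVec_eq hA ![1]
  simp only [Fintype.card_fin, ZMod.card] at h
  rw [← h]
  congr 1
  ext w
  simp [funext_iff, dotProduct_comm]

theorem card_dotProduct_eq_one_and_eq_one {L : ℕ} {u v : Fin L → F2} (hu : u ≠ 0) (hv : v ≠ 0)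
    (huv : u ≠ v) : #{w | w ⬝ᵥ u = 1 ∧ w ⬝ᵥ v = 1} = 2 ^ (L - 2) := by
  have hA : LinearIndependent F2 (Matrix.of ![u, v]).row := by
    refine LinearIndependent.pair_iff.mpr fun s t hst => ?_
    have h01 : ∀ a : F2, a = 0 ∨ a = 1 := by decide
    rcases h01 s with rfl | rfl <;> rcases h01 t with rfl | rfl
    · simp
    · simp_all
    · simp_all
    · rw [one_smul, one_smul, add_eq_zero_iff_eq_neg] at hst
      exact absurd (hst.trans (funext fun i => ZMod.neg_eq_self_mod_two (v i))) huv
  have h := card_filter_mulVec_eq hA ![1, 1]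
  simp only [Fintype.card_fin, ZMod.card] at h
  rw [← h]
  congr 1
  ext w
  simp [funext_iff, Fin.forall_fin_two, dotProduct_comm]

section Cover

variable {n : ℕ}

theorem covCount_add (H₁ H₂ : Multiset (AffineSubspace F2 (Fin n → F2))) (x : Fin n → F2) :
    covCount n (H₁ + H₂) x = covCount n H₁ x + covCount n H₂ x :=
  Multiset.countP_add _ _ _

theorem covCount_sum_nsmul_fiber {W : Type*} [AddCommGroup W] [Module F2 W] [Fintype W]
    (ψ : (Fin n → F2) →ₗ[F2] W) (μ : W → ℕ) (x : Fin n → F2) :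
    covCount n (∑ c, μ c • {fiber ψ c}) x = μ (ψ x) := by
  rw [covCount, ← Multiset.coe_countPAddMonoidHom, map_sum]
  simp only [Multiset.coe_countPAddMonoidHom, Multiset.countP_nsmul, ← Multiset.cons_zero,
    Multiset.countP_cons, Multiset.countP_zero, zero_add, mem_fiber, mul_ite, mul_one, mul_zero,
    Finset.sum_ite_eq, Finset.mem_univ, if_true]

theorem covCount_map_fiber {ι W : Type*} [AddCommGroup W] [Module F2 W]
    (ψ : ι → (Fin n → F2) →ₗ[F2] W) (c : W) (M : Multiset ι) (x : Fin n → F2) :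
    covCount n (M.map fun i => fiber (ψ i) c) x = M.countP fun i => ψ i x = c := by
  rw [covCount, Multiset.countP_map, Multiset.countP_eq_card_filter]
  rfl

theorem sum_covCount (H : Multiset (AffineSubspace F2 (Fin n → F2))) :
    ∑ x, covCount n H x = (H.map fun S : AffineSubspace F2 (Fin n → F2) => Nat.card S).sum := by
  induction H using Multiset.induction_on with
  | empty => simp [covCount]
  | cons S H ih =>
    simp only [covCount, Multiset.countP_cons, sum_add_distrib] at ih ⊢
    rw [ih, Multiset.map_cons, Multiset.sum_cons, add_comm, sum_boole, Nat.card_eq_fintype_card,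
      Fintype.card_subtype]
    rfl

theorem sum_covCount_of_finrank {d : ℕ} {H : Multiset (AffineSubspace F2 (Fin n → F2))}
    (hH : ∀ S ∈ H, (S : Set (Fin n → F2)).Nonempty ∧ Module.finrank F2 S.direction = n - d) :
    ∑ x, covCount n H x = Multiset.card H * 2 ^ (n - d) := by
  rw [sum_covCount, Multiset.map_congr rfl fun S hS => by
    rw [S.natCard_eq_pow_finrank (hH S hS).1, (hH S hS).2, Nat.card_zmod]]
  simp [mul_comm]

end Cover

theorem sub_div_le_of_pred_mul_le {D B k N : ℕ} (hB : 0 < B) (h : (D * B - 1) * k ≤ N * B) :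
    D * k - k / B ≤ N := by
  by_contra! hlt
  have hdiv : k / B * B + k % B = k := Nat.div_add_mod' k B
  have hmod := Nat.mod_lt k hB
  have hle : (N + 1 + k / B) * B ≤ D * k * B := Nat.mul_le_mul_right _ (by omega)
  rw [Nat.sub_mul, one_mul, mul_right_comm] at h
  rw [add_mul, add_mul, one_mul] at hle
  omega

theorem pred_two_pow_mul_le_card_mul {n k d : ℕ} {H : Multiset (AffineSubspace F2 (Fin n → F2))}
    (hH : IsCover n k d H) : (2 ^ n - 1) * k ≤ Multiset.card H * 2 ^ (n - d) :=
  calc (2 ^ n - 1) * k = ∑ _x ∈ univ.erase (0 : Fin n → F2), k := by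
        simp [card_erase_of_mem]
    _ ≤ ∑ x ∈ univ.erase 0, covCount n H x :=
        sum_le_sum fun x hx => hH.2.1 x (ne_of_mem_erase hx)
    _ ≤ ∑ x, covCount n H x := sum_le_sum_of_subset (erase_subset _ _)
    _ = Multiset.card H * 2 ^ (n - d) := sum_covCount_of_finrank hH.1

theorem le_card_of_isCover {n k d : ℕ} {H : Multiset (AffineSubspace F2 (Fin n → F2))}
    (hdn : d ≤ n) (hH : IsCover n k d H) : 2 ^ d * k - k / 2 ^ (n - d) ≤ Multiset.card H :=
  sub_div_le_of_pred_mul_le (by positivity)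
    (by rw [← pow_add, Nat.add_sub_cancel' hdn]; exact pred_two_pow_mul_le_card_mul hH)

/-- `P` copies of a pair of parallel hyperplanes of `𝔽₂^L`, together with the hyperplanes
`{v | w ⬝ᵥ v = 1}` for `w ∈ M`, form a `(k,1)`-cover of `𝔽₂^L`. -/
def IsHyperplaneCover {L : ℕ} (k P : ℕ) (M : Multiset (Fin L → F2)) : Prop :=
  P < k ∧ (∀ w ∈ M, w ≠ 0) ∧ ∀ v ≠ 0, k ≤ P + M.countP fun w => w ⬝ᵥ v = 1

theorem exists_isHyperplaneCover_of_two_pow_le {m k : ℕ} (hk : 2 ^ m ≤ k) :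
    ∃ (P : ℕ) (M : Multiset (Fin (m + 1) → F2)),
      IsHyperplaneCover k P M ∧ 2 * P + Multiset.card M = 2 * k - k / 2 ^ m := by
  have hdiv := Nat.div_add_mod' k (2 ^ m)
  have hmod := Nat.mod_lt k (Nat.two_pow_pos m)
  refine ⟨k % 2 ^ m, (k / 2 ^ m) • (univ.filter (· ≠ 0)).val,
    ⟨by omega, fun w hw => ?_, fun v hv => ?_⟩, ?_⟩
  · simpa using Multiset.mem_of_mem_nsmul hw
  · have hcount : (univ.filter (· ≠ 0)).val.countP (fun w => w ⬝ᵥ v = 1) = 2 ^ m := by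
      rw [Multiset.countP_eq_card_filter, ← Finset.filter_val, Finset.card_val, Finset.filter_filter]
      refine (congrArg card (Finset.filter_congr fun w _ => ?_)).trans (card_dotProduct_eq_one hv)
      refine and_iff_right_of_imp fun hw h0 => ?_
      simp [h0] at hw
    rw [Multiset.countP_nsmul, hcount]
    omega
  · rw [Multiset.card_nsmul, Finset.card_val, Finset.filter_ne', card_erase_of_mem (mem_univ _),
      Finset.card_univ, Fintype.card_fun, ZMod.card, Fintype.card_fin, pow_succ, Nat.mul_sub,
      mul_one, show k / 2 ^ m * (2 ^ m * 2) = 2 * (k / 2 ^ m * 2 ^ m) by ring]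
    have := Nat.le_mul_of_pos_right (k / 2 ^ m) (Nat.two_pow_pos m)
    omega

theorem exists_isHyperplaneCover_of_lt_two_pow {m k : ℕ} (hk : 2 ^ (m - 1) ≤ k)
    (hk' : k < 2 ^ m) :
    ∃ (P : ℕ) (M : Multiset (Fin (m + 1) → F2)),
      IsHyperplaneCover k P M ∧ 2 * P + Multiset.card M = 2 * k - k / 2 ^ m := by
  have hm : m ≠ 0 := by
    rintro rfl
    simp at hk hk'
    omega
  have hpow : 2 ^ m = 2 * 2 ^ (m - 1) := by
    rw [← pow_succ', Nat.sub_add_cancel (Nat.one_le_iff_ne_zero.mpr hm)]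
  have hone : (1 : Fin (m + 1) → F2) ≠ 0 := one_ne_zero
  refine ⟨k - 2 ^ (m - 1), (univ.filter (· ⬝ᵥ 1 = 1)).val,
    ⟨?_, fun w hw h0 => ?_, fun v hv => ?_⟩, ?_⟩
  · have := Nat.one_le_two_pow (n := m - 1)
    omega
  · simp [h0] at hw
  · have hcount : 2 ^ (m - 1) ≤ #{w | w ⬝ᵥ 1 = 1 ∧ w ⬝ᵥ v = 1} := by
      by_cases hv1 : v = 1
      · subst hv1
        simp only [and_self, card_dotProduct_eq_one hone]
        exact Nat.pow_le_pow_right two_pos (Nat.sub_le _ _)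
      · exact (card_dotProduct_eq_one_and_eq_one hone hv (Ne.symm hv1)).ge
    rw [Multiset.countP_eq_card_filter, ← Finset.filter_val, Finset.card_val, Finset.filter_filter]
    omega
  · rw [Finset.card_val, card_dotProduct_eq_one hone, Nat.div_eq_of_lt hk', Nat.add_sub_cancel]
    omega

section Slice

variable {n e L : ℕ} (σ : (Fin n → F2) ≃ₗ[F2] (Fin e → F2) × (Fin L → F2))

def sliceMap (w : Fin L → F2) : (Fin n → F2) →ₗ[F2] (Fin e → F2) × F2 :=
  (LinearMap.id.prodMap (dotProductEquiv F2 (Fin L) w)) ∘ₗ σ.toLinearMap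

theorem sliceMap_apply (w : Fin L → F2) (x : Fin n → F2) :
    sliceMap σ w x = ((σ x).1, w ⬝ᵥ (σ x).2) :=
  rfl

theorem sliceMap_surjective {w : Fin L → F2} (hw : w ≠ 0) :
    Function.Surjective (sliceMap σ w) := by
  have hdot : Function.Surjective (dotProductEquiv F2 (Fin L) w) :=
    LinearMap.surjective_of_ne_zero ((dotProductEquiv F2 (Fin L)).map_ne_zero_iff.mpr hw)
  exact (Function.surjective_id.prodMap hdot).comp σ.surjective

def sliceCover (w₀ : Fin L → F2) (k P : ℕ) (M : Multiset (Fin L → F2)) :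
    Multiset (AffineSubspace F2 (Fin n → F2)) :=
  (∑ c : (Fin e → F2) × F2, (if c.1 = 0 then P else k) • {fiber (sliceMap σ w₀) c}) +
    M.map fun w => fiber (sliceMap σ w) (0, 1)

theorem covCount_sliceCover (w₀ : Fin L → F2) (k P : ℕ) (M : Multiset (Fin L → F2))
    (x : Fin n → F2) :
    covCount n (sliceCover σ w₀ k P M) x =
      (if (σ x).1 = 0 then P else k) + M.countP fun w => (σ x).1 = 0 ∧ w ⬝ᵥ (σ x).2 = 1 := by
  simp only [sliceCover, covCount_add, covCount_sum_nsmul_fiber, covCount_map_fiber,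
    sliceMap_apply, Prod.mk.injEq]
  congr 1

theorem card_sliceCover (w₀ : Fin L → F2) (k P : ℕ) (M : Multiset (Fin L → F2)) :
    Multiset.card (sliceCover σ w₀ k P M) = 2 * (P + (2 ^ e - 1) * k) + Multiset.card M := by
  simp only [sliceCover, Multiset.card_add, Multiset.card_sum, Multiset.card_map,
    Multiset.card_nsmul, Multiset.card_singleton, mul_one]
  rw [Fintype.sum_prod_type' (f := fun u _ => if u = 0 then P else k)]
  simp only [Finset.sum_const, Finset.card_univ, ZMod.card, smul_eq_mul]
  rw [← Finset.mul_sum, ← add_sum_erase _ _ (mem_univ 0), if_pos rfl,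
    sum_congr rfl fun u hu => if_neg (ne_of_mem_erase hu)]
  simp [card_erase_of_mem]

theorem isCover_sliceCover {w₀ : Fin L → F2} (hw₀ : w₀ ≠ 0) {k P : ℕ}
    {M : Multiset (Fin L → F2)} (hM : IsHyperplaneCover k P M) :
    IsCover n k (e + 1) (sliceCover σ w₀ k P M) := by
  obtain ⟨hP, hM₀, hcov⟩ := hM
  have hdim : ∀ {w}, w ≠ 0 → ∀ c, (fiber (sliceMap σ w) c : Set (Fin n → F2)).Nonempty ∧
      Module.finrank F2 (fiber (sliceMap σ w) c).direction = n - (e + 1) := fun hw c =>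
    ⟨fiber_nonempty (sliceMap_surjective σ hw) c, by
      rw [finrank_direction_fiber (sliceMap_surjective σ hw)]; simp⟩
  refine ⟨fun S hS => ?_, fun x hx => ?_, ?_⟩
  · simp only [sliceCover, Multiset.mem_add, Multiset.mem_sum, Multiset.mem_map] at hS
    obtain ⟨c, -, hc⟩ | ⟨w, hw, rfl⟩ := hS
    · rw [Multiset.mem_singleton.mp (Multiset.mem_of_mem_nsmul hc)]
      exact hdim hw₀ c
    · exact hdim (hM₀ w hw) _
  · rw [covCount_sliceCover]
    by_cases hx₁ : (σ x).1 = 0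
    · have hx₂ : (σ x).2 ≠ 0 := fun hx₂ => hx (σ.map_eq_zero_iff.mp (Prod.ext hx₁ hx₂))
      simpa [hx₁] using hcov _ hx₂
    · simp [hx₁]
  · simpa [covCount_sliceCover] using hP

end Slice

theorem exists_isCover_card_eq {n k d : ℕ} (hd : 1 ≤ d) (hdn : d ≤ n)
    (hk : 2 ^ (n - d - 1) ≤ k) :
    ∃ H, IsCover n k d H ∧ Multiset.card H = 2 ^ d * k - k / 2 ^ (n - d) := by
  obtain ⟨e, rfl⟩ : ∃ e, d = e + 1 := ⟨d - 1, by omega⟩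
  obtain ⟨P, M, hM, hcard⟩ : ∃ (P : ℕ) (M : Multiset (Fin (n - (e + 1) + 1) → F2)),
      IsHyperplaneCover k P M ∧ 2 * P + Multiset.card M = 2 * k - k / 2 ^ (n - (e + 1)) := by
    rcases le_or_gt (2 ^ (n - (e + 1))) k with hk' | hk'
    · exact exists_isHyperplaneCover_of_two_pow_le hk'
    · exact exists_isHyperplaneCover_of_lt_two_pow hk hk'
  let σ := LinearEquiv.ofFinrankEq (R := F2) (Fin n → F2)
    ((Fin e → F2) × (Fin (n - (e + 1) + 1) → F2)) (by simp; omega)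
  refine ⟨sliceCover σ 1 k P M, isCover_sliceCover σ one_ne_zero hM, ?_⟩
  rw [card_sliceCover, Nat.sub_mul, one_mul, pow_succ,
    show 2 ^ e * 2 * k = 2 * (2 ^ e * k) by ring]
  have := Nat.div_le_self k (2 ^ (n - (e + 1)))
  have := Nat.le_mul_of_pos_left k (Nat.two_pow_pos e)
  omega

theorem stmt0_general (n k d : ℕ) (hd : 1 ≤ d) (hdn : d ≤ n)
    (hbig : 2 ^ (n - d - 1) ≤ k) :
    f n k d = 2 ^ d * k - k / 2 ^ (n - d) := by
  obtain ⟨H, hH, hcard⟩ := exists_isCover_card_eq hd hdn hbig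
  refine IsLeast.csInf_eq ⟨⟨H, hH, hcard⟩, ?_⟩
  rintro _ ⟨H', hH', rfl⟩
  exact le_card_of_isCover hdn hH'

theorem stmt0 (n k d : ℕ) (hk : 1 ≤ k) (hd : 1 ≤ d) (hdn : d ≤ n)
    (hbig : 2 ^ (n - d - 1) ≤ k) :
    f n k d = 2 ^ d * k - k / 2 ^ (n - d) :=
  stmt0_general n k d hd hdn hbig
end

section
/- Let n, k, d be integers with n ≥ d ≥ 1 and k ≥ 2. Then f(n,k,d) ≤ n + 2^d·k − d − 2. -/
open scoped Classical

/-!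
Write `d = e + 1` and `𝔽₂ⁿ = 𝔽₂ᵉ × 𝔽₂ᵐ`. In `𝔽₂ᵐ` the `k - 2` copies of both level sets of one
coordinate, the hyperplanes `xᵢ = 1` and the hyperplane `∑ xᵢ = 1` form a `(k,1)`-cover of size
`m + 2k - 3`: a nonzero point with `w` coordinates equal to `1` lies in `k - 2 + w + [w odd] ≥ k`
of them, the origin in `k - 2`. Placed in the slice `{0} × 𝔽₂ᵐ` these hyperplanes have
codimension `d` in `𝔽₂ⁿ`, and each of the `2ᵉ - 1` other slices `{u} × 𝔽₂ᵐ` is covered `k` times by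
`k` copies of the two level sets of a coordinate. Altogether this uses
`m + 2k - 3 + (2ᵉ - 1)·2k = n + 2ᵈk - d - 2` subspaces.
-/

open Module Finset

section

variable {K V W : Type*} [Ring K] [AddCommGroup V] [Module K V] [AddCommGroup W] [Module K W]

theorem AffineSubspace.mem_mk'_ker_iff (L : V →ₗ[K] W) {x x₀ : V} :
    x ∈ AffineSubspace.mk' x₀ (LinearMap.ker L) ↔ L x = L x₀ := by
  rw [AffineSubspace.mem_mk', LinearMap.mem_ker, vsub_eq_sub, map_sub, sub_eq_zero]

theorem AffineSubspace.finrank_direction_map {P₁ P₂ : Type*} [AddTorsor V P₁] [AddTorsor W P₂]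
    (s : AffineSubspace K P₁) {f : P₁ →ᵃ[K] P₂} (hf : Function.Injective f.linear) :
    finrank K (s.map f).direction = finrank K s.direction := by
  rw [AffineSubspace.map_direction]
  exact (Submodule.equivMapOfInjective _ hf _).finrank_eq.symm

end

theorem AffineSubspace.finrank_direction_mk'_ker {K V : Type*} [Field K] [AddCommGroup V]
    [Module K V] [FiniteDimensional K V] {φ : Dual K V} (hφ : φ ≠ 0) (x₀ : V) :
    finrank K (AffineSubspace.mk' x₀ (LinearMap.ker φ)).direction = finrank K V - 1 := by
  rw [AffineSubspace.direction_mk', ← φ.finrank_ker_add_one_of_ne_zero hφ, Nat.add_sub_cancel]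

theorem LinearMap.proj_ne_zero {R ι : Type*} [Semiring R] [Nontrivial R] [DecidableEq ι] (i : ι) :
    (LinearMap.proj i : (ι → R) →ₗ[R] R) ≠ 0 := fun h => by
  simpa using LinearMap.congr_fun h (Pi.single i 1)

def Fin.appendAffineMap (R : Type*) [Ring R] {e m : ℕ} (u : Fin e → R) :
    (Fin m → R) →ᵃ[R] (Fin (e + m) → R) where
  toFun := Fin.append u
  linear :=
    { toFun := Fin.append 0
      map_add' y z := by ext i; refine Fin.addCases (fun i => ?_) (fun i => ?_) i <;> simp
      map_smul' c y := by ext i; refine Fin.addCases (fun i => ?_) (fun i => ?_) i <;> simp }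
  map_vadd' y v := by ext i; refine Fin.addCases (fun i => ?_) (fun i => ?_) i <;> simp

@[simp]
theorem Fin.appendAffineMap_apply (R : Type*) [Ring R] {e m : ℕ} (u : Fin e → R) (y : Fin m → R) :
    Fin.appendAffineMap R u y = Fin.append u y :=
  rfl

@[simp]
theorem Fin.appendAffineMap_linear_apply (R : Type*) [Ring R] {e m : ℕ} (u : Fin e → R)
    (y : Fin m → R) : (Fin.appendAffineMap R u).linear y = Fin.append 0 y :=
  rfl

theorem Fin.appendAffineMap_linear_injective (R : Type*) [Ring R] {e m : ℕ} (u : Fin e → R) :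
    Function.Injective (Fin.appendAffineMap R (m := m) u).linear := by
  intro y z h
  funext i
  simpa using congrFun h (Fin.natAdd e i)

theorem Fin.mem_map_appendAffineMap {R : Type*} [Ring R] {e m : ℕ} {u : Fin e → R}
    {S : AffineSubspace R (Fin m → R)} {x : Fin (e + m) → R} :
    x ∈ S.map (Fin.appendAffineMap R u) ↔
      (fun i => x (Fin.castAdd m i)) = u ∧ (fun i => x (Fin.natAdd e i)) ∈ S := by
  rw [AffineSubspace.mem_map]
  constructor
  · rintro ⟨y, hy, rfl⟩
    exact ⟨by simp, by simpa using hy⟩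
  · rintro ⟨rfl, hx⟩
    exact ⟨_, hx, Fin.append_castAdd_natAdd⟩

def IsOfCodim (n d : ℕ) (S : AffineSubspace F2 (Fin n → F2)) : Prop :=
  (S : Set (Fin n → F2)).Nonempty ∧ finrank F2 S.direction = n - d

section covCount

variable {n : ℕ} (H H' : Multiset (AffineSubspace F2 (Fin n → F2))) (x : Fin n → F2)

theorem covCount_add_s6 : covCount n (H + H') x = covCount n H x + covCount n H' x :=
  Multiset.countP_add _ _ _

theorem covCount_cons (S : AffineSubspace F2 (Fin n → F2)) :
    covCount n (S ::ₘ H) x = covCount n H x + if x ∈ S then 1 else 0 :=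
  Multiset.countP_cons _ _ _

theorem covCount_singleton (S : AffineSubspace F2 (Fin n → F2)) :
    covCount n {S} x = if x ∈ S then 1 else 0 := by
  rw [← Multiset.cons_zero, covCount_cons]
  simp [covCount]

theorem covCount_nsmul (j : ℕ) : covCount n (j • H) x = j * covCount n H x :=
  Multiset.countP_nsmul _ _ _

theorem covCount_map_val {ι : Type*} (s : Finset ι) (g : ι → AffineSubspace F2 (Fin n → F2)) :
    covCount n (s.val.map g) x = #{i ∈ s | x ∈ g i} := by
  rw [covCount, Multiset.countP_map]
  rfl

theorem f_le_card {k d : ℕ} (hH : IsCover n k d H) : f n k d ≤ Multiset.card H :=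
  Nat.sInf_le ⟨H, hH, rfl⟩

end covCount

theorem isOfCodim_mk'_ker {n : ℕ} {φ : Dual F2 (Fin n → F2)} (hφ : φ ≠ 0) (x₀ : Fin n → F2) :
    IsOfCodim n 1 (AffineSubspace.mk' x₀ (LinearMap.ker φ)) := by
  refine ⟨AffineSubspace.mk'_nonempty _ _, ?_⟩
  rw [AffineSubspace.finrank_direction_mk'_ker hφ, finrank_fin_fun]

theorem F2.eq_zero_or_eq_one : ∀ a : F2, a = 0 ∨ a = 1 := by decide

theorem F2.sum_eq_card_filter_eq_one {ι : Type*} [Fintype ι] (x : ι → F2) :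
    ∑ i, x i = (#{i | x i = 1} : F2) := by
  rw [Finset.natCast_card_filter]
  refine Finset.sum_congr rfl fun i _ => ?_
  rcases F2.eq_zero_or_eq_one (x i) with h | h <;> simp [h]

section Hyperplanes

variable {m : ℕ}

def coordHyperplane (i : Fin m) (c : F2) : AffineSubspace F2 (Fin m → F2) :=
  AffineSubspace.mk' (Pi.single i c) (LinearMap.ker (LinearMap.proj i))

@[simp]
theorem mem_coordHyperplane {i : Fin m} {c : F2} {x : Fin m → F2} :
    x ∈ coordHyperplane i c ↔ x i = c := by
  rw [coordHyperplane, AffineSubspace.mem_mk'_ker_iff]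
  simp

theorem isOfCodim_coordHyperplane (i : Fin m) (c : F2) : IsOfCodim m 1 (coordHyperplane i c) :=
  isOfCodim_mk'_ker (LinearMap.proj_ne_zero i) _

def coordPair (i : Fin m) : Multiset (AffineSubspace F2 (Fin m → F2)) :=
  {coordHyperplane i 0, coordHyperplane i 1}

theorem isOfCodim_of_mem_coordPair {i : Fin m} {S : AffineSubspace F2 (Fin m → F2)}
    (hS : S ∈ coordPair i) : IsOfCodim m 1 S := by
  simp only [coordPair, Multiset.insert_eq_cons, Multiset.mem_cons, Multiset.mem_singleton] at hS
  rcases hS with rfl | rfl <;> exact isOfCodim_coordHyperplane i _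

theorem covCount_coordPair (i : Fin m) (x : Fin m → F2) : covCount m (coordPair i) x = 1 := by
  rcases F2.eq_zero_or_eq_one (x i) with h | h <;>
    simp [coordPair, covCount_cons, covCount_singleton, h]

def oddWeightHyperplane (i₀ : Fin m) : AffineSubspace F2 (Fin m → F2) :=
  AffineSubspace.mk' (Pi.single i₀ 1) (LinearMap.ker (∑ i, LinearMap.proj i))

theorem mem_oddWeightHyperplane {i₀ : Fin m} {x : Fin m → F2} :
    x ∈ oddWeightHyperplane i₀ ↔ ∑ i, x i = 1 := by
  rw [oddWeightHyperplane, AffineSubspace.mem_mk'_ker_iff]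
  simp

theorem isOfCodim_oddWeightHyperplane (i₀ : Fin m) : IsOfCodim m 1 (oddWeightHyperplane i₀) := by
  refine isOfCodim_mk'_ker (fun h => ?_) _
  simpa using LinearMap.congr_fun h (Pi.single i₀ 1)

def hyperplaneCover (k : ℕ) (i₀ : Fin m) : Multiset (AffineSubspace F2 (Fin m → F2)) :=
  (k - 2) • coordPair i₀ + univ.val.map (coordHyperplane · 1) + {oddWeightHyperplane i₀}

theorem card_hyperplaneCover {k : ℕ} (hk : 2 ≤ k) (i₀ : Fin m) :
    Multiset.card (hyperplaneCover k i₀) = m + 2 * k - 3 := by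
  simp [hyperplaneCover, coordPair]
  omega

theorem covCount_hyperplaneCover (k : ℕ) (i₀ : Fin m) (x : Fin m → F2) :
    covCount m (hyperplaneCover k i₀) x
      = (k - 2) + #{i | x i = 1} + if ∑ i, x i = 1 then 1 else 0 := by
  rw [hyperplaneCover, covCount_add_s6, covCount_add_s6, covCount_nsmul, covCount_coordPair,
    covCount_singleton, mem_oddWeightHyperplane, covCount_map_val]
  simp

theorem isCover_hyperplaneCover {k : ℕ} (hk : 2 ≤ k) (i₀ : Fin m) :
    IsCover m k 1 (hyperplaneCover k i₀) := by
  refine ⟨?_, fun x hx => ?_, ?_⟩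
  · simp only [hyperplaneCover, Multiset.mem_add, Multiset.mem_nsmul, Multiset.mem_map,
      Multiset.mem_singleton]
    rintro S ((⟨-, hS⟩ | ⟨i, -, rfl⟩) | rfl)
    · exact isOfCodim_of_mem_coordPair hS
    · exact isOfCodim_coordHyperplane i 1
    · exact isOfCodim_oddWeightHyperplane i₀
  · have hweight : #{i | x i = 1} ≠ 0 := by
      obtain ⟨i, hi⟩ := Function.ne_iff.mp hx
      exact (Finset.card_pos.mpr ⟨i, by simpa using (F2.eq_zero_or_eq_one _).resolve_left hi⟩).ne'
    rw [covCount_hyperplaneCover, F2.sum_eq_card_filter_eq_one]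
    by_cases hweight1 : #{i | x i = 1} = 1
    · simp [hweight1]
      omega
    · split <;> omega
  · rw [covCount_hyperplaneCover]
    simp
    omega

end Hyperplanes

section Lift

variable {e m : ℕ} (H : (Fin e → F2) → Multiset (AffineSubspace F2 (Fin m → F2)))

-- `H u` is placed in the slice of points whose first `e` coordinates equal `u`.
def liftCover : Multiset (AffineSubspace F2 (Fin (e + m) → F2)) :=
  ∑ u, (H u).map (·.map (Fin.appendAffineMap F2 u))

theorem card_liftCover : Multiset.card (liftCover H) = ∑ u, Multiset.card (H u) := by
  simp [liftCover]

theorem covCount_liftCover (x : Fin (e + m) → F2) :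
    covCount (e + m) (liftCover H) x
      = covCount m (H fun i => x (Fin.castAdd m i)) (fun i => x (Fin.natAdd e i)) := by
  rw [covCount, liftCover, ← Multiset.coe_countPAddMonoidHom, map_sum]
  simp only [Multiset.coe_countPAddMonoidHom, Multiset.countP_map, Fin.mem_map_appendAffineMap]
  rw [Finset.sum_eq_single_of_mem (fun i => x (Fin.castAdd m i)) (mem_univ _)
    fun u _ hu => by simp [Ne.symm hu]]
  simp [covCount, Multiset.countP_eq_card_filter]

theorem isCover_liftCover {k d : ℕ} (h0 : IsCover m k d (H 0))
    (hdim : ∀ u ≠ 0, ∀ S ∈ H u, IsOfCodim m d S) (hcov : ∀ u ≠ 0, ∀ y, k ≤ covCount m (H u) y) :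
    IsCover (e + m) k (e + d) (liftCover H) := by
  refine ⟨?_, fun x hx => ?_, ?_⟩
  · intro S hS
    simp only [liftCover, Multiset.mem_sum, mem_univ, true_and, Multiset.mem_map] at hS
    obtain ⟨u, T, hT, rfl⟩ := hS
    obtain ⟨hne, hrank⟩ : IsOfCodim m d T := by
      by_cases hu : u = 0
      · subst hu
        exact h0.1 T hT
      · exact hdim u hu T hT
    refine ⟨by rw [AffineSubspace.coe_map]; exact hne.image _, ?_⟩
    rw [AffineSubspace.finrank_direction_map _ (Fin.appendAffineMap_linear_injective F2 u), hrank]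
    omega
  · rw [covCount_liftCover]
    by_cases hu : (fun i => x (Fin.castAdd m i)) = 0
    · rw [hu]
      refine h0.2.1 _ fun htail => hx ?_
      rw [← Fin.append_castAdd_natAdd (f := x), hu, htail]
      funext i
      refine Fin.addCases (fun i => ?_) (fun i => ?_) i <;> simp
    · exact hcov _ hu _
  · rw [covCount_liftCover]
    exact h0.2.2

end Lift

theorem f_add_le {e m k : ℕ} (hk : 2 ≤ k) (hm : 0 < m) :
    f (e + m) k (e + 1) ≤ (m + 2 * k - 3) + (2 ^ e - 1) * (2 * k) := by
  let i₀ : Fin m := ⟨0, hm⟩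
  let H (u : Fin e → F2) := if u = 0 then hyperplaneCover k i₀ else k • coordPair i₀
  have hcover : IsCover (e + m) k (e + 1) (liftCover H) := by
    refine isCover_liftCover H (by simpa [H] using isCover_hyperplaneCover hk i₀)
      (fun u hu S hS => ?_) fun u hu y => ?_
    · simp only [H, hu, if_false] at hS
      exact isOfCodim_of_mem_coordPair (Multiset.mem_of_mem_nsmul hS)
    · simp [H, hu, covCount_nsmul, covCount_coordPair]
  have hslice : ∀ u ∈ ({0}ᶜ : Finset (Fin e → F2)), Multiset.card (H u) = 2 * k := fun u hu => by
    simp_all [H, coordPair, mul_comm]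
  calc f (e + m) k (e + 1) ≤ Multiset.card (liftCover H) := f_le_card _ hcover
    _ = (m + 2 * k - 3) + (2 ^ e - 1) * (2 * k) := by
      rw [card_liftCover, Fintype.sum_eq_add_sum_compl 0, sum_congr rfl hslice, sum_const,
        card_compl, card_singleton, smul_eq_mul]
      simp [H, card_hyperplaneCover hk, ZMod.card]

theorem stmt6 (n k d : ℕ) (hk : 2 ≤ k) (hd : 1 ≤ d) (hdn : d ≤ n) :
    f n k d ≤ n + 2 ^ d * k - d - 2 := by
  obtain ⟨e, rfl⟩ : ∃ e, d = e + 1 := ⟨d - 1, by omega⟩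
  obtain ⟨m, rfl⟩ : ∃ m, n = e + m := ⟨n - e, by omega⟩
  have hbound := f_add_le (e := e) hk (show 0 < m by omega)
  have hpow : 2 ^ (e + 1) * k = 2 * (2 ^ e * k) := by ring
  have hslices : (2 ^ e - 1) * (2 * k) = 2 * (2 ^ e * k) - 2 * k := by
    rw [Nat.sub_mul, one_mul]
    ring_nf
  have hk_le : k ≤ 2 ^ e * k := Nat.le_mul_of_pos_left k (by positivity)
  omega
end

section
/- Let n ≥ 1, m ≥ 1 and k ≥ 1 be integers. There exists a (k,1;0)-cover of 𝔽₂ⁿ of cardinality m if and only if there exists a linear map φ : 𝔽₂ⁿ → 𝔽₂ᵐ such that for every nonzero x ∈ 𝔽₂ⁿ the Hamming weight of φ(x) (the number of nonzero coordinates of φ(x)) is at least k. -/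
open scoped Classical

/-!
An affine hyperplane missing the origin is the level set `{g = 1}` of a nonzero linear functional
`g`, and over `𝔽₂` the condition `g x = 1` is the same as `g x ≠ 0`. Hence `m` such hyperplanes
`{gᵢ = 1}` cover `x` exactly as often as `x ↦ (gᵢ x)ᵢ` has nonzero coordinates. Conversely, a
zero coordinate functional of `φ` can be replaced by any nonzero functional, which can only
increase the coverage counts.
-/

open Module

section LevelHyperplane

variable {K V : Type*} [Field K] [AddCommGroup V] [Module K V]

def levelHyperplane (g : Dual K V) : AffineSubspace K V where
  carrier := {x | g x = 1}
  smul_vsub_vadd_mem' c p₁ p₂ p₃ h₁ h₂ h₃ := by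
    simp_all only [Set.mem_ofPred_eq, vsub_eq_sub, vadd_eq_add, map_add, map_smul, map_sub,
      sub_self, smul_zero, zero_add]

variable {g : Dual K V}

@[simp]
lemma mem_levelHyperplane {x : V} : x ∈ levelHyperplane g ↔ g x = 1 := Iff.rfl

lemma levelHyperplane_nonempty (hg : g ≠ 0) : (levelHyperplane g : Set V).Nonempty :=
  LinearMap.surjective hg 1

lemma direction_levelHyperplane (hg : g ≠ 0) :
    (levelHyperplane g).direction = LinearMap.ker g := by
  obtain ⟨p, hp⟩ := levelHyperplane_nonempty hg
  ext v
  rw [← vadd_vsub v p, AffineSubspace.vsub_right_mem_direction_iff_mem hp, vadd_vsub]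
  simp_all [vadd_eq_add]

lemma finrank_direction_levelHyperplane [FiniteDimensional K V] (hg : g ≠ 0) :
    finrank K (levelHyperplane g).direction = finrank K V - 1 := by
  rw [direction_levelHyperplane hg, ← Dual.finrank_ker_add_one_of_ne_zero hg, Nat.add_sub_cancel]

lemma exists_eq_levelHyperplane [FiniteDimensional K V] {S : AffineSubspace K V}
    (hS : (S : Set V).Nonempty) (hdim : finrank K S.direction = finrank K V - 1)
    (h0 : (0 : V) ∉ S) : ∃ g : Dual K V, g ≠ 0 ∧ S = levelHyperplane g := by
  obtain ⟨p, hp⟩ := hS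
  have hpS : p ∉ S.direction := fun h ↦
    h0 <| (AffineSubspace.vsub_right_mem_direction_iff_mem hp 0).mp (by simpa using neg_mem h)
  obtain ⟨f, hfp, hf⟩ := Submodule.exists_dual_map_eq_bot_of_notMem hpS inferInstance
  have hf0 : f ≠ 0 := by rintro rfl; exact hfp rfl
  have hker : S.direction = LinearMap.ker f :=
    Submodule.eq_of_le_of_finrank_eq (LinearMap.le_ker_iff_map.mpr hf)
      (by rw [hdim, ← Dual.finrank_ker_add_one_of_ne_zero hf0, Nat.add_sub_cancel])
  set g := (f p)⁻¹ • f
  have hg : g ≠ 0 := smul_ne_zero (inv_ne_zero hfp) hf0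
  refine ⟨g, hg, (AffineSubspace.eq_iff_direction_eq_of_mem hp ?_).mpr ?_⟩
  · simp [g, inv_mul_cancel₀ hfp]
  · rw [direction_levelHyperplane hg, hker, LinearMap.ker_smul _ _ (inv_ne_zero hfp)]

lemma exists_ne_zero_levelHyperplane_le [Nontrivial V] (f : Dual K V) :
    ∃ g : Dual K V, g ≠ 0 ∧ levelHyperplane f ≤ levelHyperplane g := by
  by_cases hf : f = 0
  · obtain ⟨g, hg⟩ := exists_ne (0 : Dual K V)
    exact ⟨g, hg, fun x hx ↦ by simp [hf] at hx⟩
  · exact ⟨f, hf, le_rfl⟩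

end LevelHyperplane

lemma Multiset.exists_fin_map_univ_eq {α : Type*} {m : ℕ} {H : Multiset α}
    (hH : Multiset.card H = m) : ∃ v : Fin m → α, Finset.univ.val.map v = H := by
  obtain ⟨l, rfl⟩ : ∃ l : List α, (l : Multiset α) = H := ⟨H.toList, H.coe_toList⟩
  rw [Multiset.coe_card] at hH
  subst hH
  exact ⟨l.get, by rw [Fin.univ_val_map, List.ofFn_get]⟩

lemma ZMod.ne_zero_iff_eq_one_mod_two (a : ZMod 2) : a ≠ 0 ↔ a = 1 := by
  revert a; decide

section Covers

variable {n m k : ℕ}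

lemma covCount_map_levelHyperplane (g : Fin m → Dual F2 (Fin n → F2)) (x : Fin n → F2) :
    covCount n (Finset.univ.val.map fun i ↦ levelHyperplane (g i)) x =
      (Finset.univ.filter fun i ↦ LinearMap.pi g x i ≠ 0).card := by
  simp only [covCount, Multiset.countP_map, mem_levelHyperplane, LinearMap.pi_apply,
    ZMod.ne_zero_iff_eq_one_mod_two]
  rfl

lemma isCoverExact_map_levelHyperplane_iff (g : Fin m → Dual F2 (Fin n → F2))
    (hg : ∀ i, g i ≠ 0) :
    IsCoverExact n k 1 0 (Finset.univ.val.map fun i ↦ levelHyperplane (g i)) ↔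
      ∀ x : Fin n → F2, x ≠ 0 → k ≤ (Finset.univ.filter fun i ↦ LinearMap.pi g x i ≠ 0).card := by
  simp only [IsCoverExact, covCount_map_levelHyperplane, map_zero, Pi.zero_apply, ne_eq,
    not_true_eq_false, Finset.filter_false, Finset.card_empty, and_true]
  refine and_iff_right fun S hS ↦ ?_
  obtain ⟨i, -, rfl⟩ := Multiset.mem_map.mp hS
  exact ⟨levelHyperplane_nonempty (hg i), by
    rw [finrank_direction_levelHyperplane (hg i), finrank_fin_fun]⟩

lemma IsCoverExact.exists_eq_map_levelHyperplane {H : Multiset (AffineSubspace F2 (Fin n → F2))}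
    (hH : IsCoverExact n k 1 0 H) (hcard : Multiset.card H = m) :
    ∃ g : Fin m → Dual F2 (Fin n → F2),
      (∀ i, g i ≠ 0) ∧ Finset.univ.val.map (fun i ↦ levelHyperplane (g i)) = H := by
  obtain ⟨hdim, -, h0⟩ := hH
  obtain ⟨v, rfl⟩ := Multiset.exists_fin_map_univ_eq hcard
  have hv (i : Fin m) : ∃ g : Dual F2 (Fin n → F2), g ≠ 0 ∧ v i = levelHyperplane g := by
    have hmem : v i ∈ Finset.univ.val.map v := Multiset.mem_map_of_mem v (Finset.mem_univ i)
    obtain ⟨hne, hfin⟩ := hdim _ hmem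
    exact exists_eq_levelHyperplane hne (by rwa [finrank_fin_fun])
      (Multiset.countP_eq_zero.mp h0 _ hmem)
  choose g hg hvg using hv
  exact ⟨g, hg, by simp_rw [hvg]⟩

end Covers

theorem stmt9_general (n m k : ℕ) (hn : 1 ≤ n) :
    (∃ H, IsCoverExact n k 1 0 H ∧ Multiset.card H = m) ↔
    (∃ φ : (Fin n → F2) →ₗ[F2] (Fin m → F2), ∀ x : Fin n → F2, x ≠ 0 →
      k ≤ (Finset.univ.filter (fun i => φ x i ≠ 0)).card) := by
  constructor
  · rintro ⟨H, hH, hcard⟩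
    obtain ⟨g, hg, rfl⟩ := hH.exists_eq_map_levelHyperplane hcard
    exact ⟨LinearMap.pi g, (isCoverExact_map_levelHyperplane_iff g hg).mp hH⟩
  · rintro ⟨φ, hφ⟩
    have : Nonempty (Fin n) := ⟨⟨0, hn⟩⟩
    choose g hg hφg using fun i ↦ exists_ne_zero_levelHyperplane_le (LinearMap.proj i ∘ₗ φ)
    refine ⟨_, (isCoverExact_map_levelHyperplane_iff g hg).mpr fun x hx ↦ (hφ x hx).trans ?_,
      by simp⟩
    refine Finset.card_le_card fun i ↦ ?_
    simp only [Finset.mem_filter, Finset.mem_univ, true_and, LinearMap.pi_apply,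
      ZMod.ne_zero_iff_eq_one_mod_two]
    exact fun hi ↦ hφg i hi

theorem stmt9 (n m k : ℕ) (hn : 1 ≤ n) (hm : 1 ≤ m) (hk : 1 ≤ k) :
    (∃ H, IsCoverExact n k 1 0 H ∧ Multiset.card H = m) ↔
    (∃ φ : (Fin n → F2) →ₗ[F2] (Fin m → F2), ∀ x : Fin n → F2, x ≠ 0 →
      k ≤ (Finset.univ.filter (fun i => φ x i ≠ 0)).card) :=
  stmt9_general n m k hn
end

section
/- For every integer k ≥ 4, we have f(k,k,1) ≤ 3k − 4; that is, there is a (k,1)-cover of 𝔽₂ᵏ consisting of at most 3k − 4 affine hyperplanes. -/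
/-!
Write `k = m + 4` and single out the coordinate `x₀`. Take `m` copies of `{x₀ = 0}` and, for each
of the `k` linear forms `ℓ = x₁, …, x_{k-1}` and `ℓ = x₁ + ⋯ + x_{k-1}`, the pair of hyperplanes
`{ℓ = 1}` and `{x₀ + ℓ = 1}`: `m + 2k = 3k - 4` hyperplanes, of which only the `m` copies contain
the origin. If `x₀ = 1`, exactly one hyperplane of each pair contains `x`, giving `k`. If `x₀ = 0`,
both or neither do, so a nonzero `x` with `w ≥ 1` ones lies in `m + 2w + 2[w odd] ≥ m + 4 = k` of
them.
-/

open scoped Classical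

open Finset

section LevelSet

variable {K V : Type*}

def levelSet [Ring K] [AddCommGroup V] [Module K V] (φ : V →ₗ[K] K) (c : K) :
    AffineSubspace K V where
  carrier := {x | φ x = c}
  smul_vsub_vadd_mem' t p₁ p₂ p₃ h₁ h₂ h₃ := by
    simp_all

@[simp]
theorem mem_levelSet [Ring K] [AddCommGroup V] [Module K V] {φ : V →ₗ[K] K} {c : K} {x : V} :
    x ∈ levelSet φ c ↔ φ x = c :=
  Iff.rfl

variable [DivisionRing K] [AddCommGroup V] [Module K V] {φ : V →ₗ[K] K}

theorem levelSet_eq_mk' {c : K} {p : V} (hp : φ p = c) :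
    levelSet φ c = AffineSubspace.mk' p (LinearMap.ker φ) := by
  ext x
  rw [mem_levelSet, AffineSubspace.mem_mk', LinearMap.mem_ker, vsub_eq_sub, map_sub, hp,
    sub_eq_zero]

theorem levelSet_nonempty (hφ : φ ≠ 0) (c : K) : (levelSet φ c : Set V).Nonempty :=
  LinearMap.surjective hφ c

theorem finrank_direction_levelSet [FiniteDimensional K V] (hφ : φ ≠ 0) (c : K) :
    Module.finrank K (levelSet φ c).direction = Module.finrank K V - 1 := by
  obtain ⟨p, hp⟩ := LinearMap.surjective hφ c
  rw [levelSet_eq_mk' hp, AffineSubspace.direction_mk', ←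
    Module.Dual.finrank_ker_add_one_of_ne_zero hφ, Nat.add_sub_cancel]

end LevelSet

section CoordSum

variable {ι K : Type*} [Semiring K]

def coordSum (s : Finset ι) : (ι → K) →ₗ[K] K :=
  ∑ i ∈ s, LinearMap.proj i

@[simp]
theorem coordSum_apply (s : Finset ι) (x : ι → K) : coordSum s x = ∑ i ∈ s, x i := by
  simp [coordSum]

theorem coordSum_ne_zero [Nontrivial K] {s : Finset ι} (hs : s.Nonempty) :
    (coordSum s : (ι → K) →ₗ[K] K) ≠ 0 := by
  obtain ⟨i, hi⟩ := hs
  intro h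
  simpa [sum_pi_single', hi] using LinearMap.congr_fun h (Pi.single i 1)

end CoordSum

theorem sum_zmod_two_eq_card_filter {ι : Type*} (s : Finset ι) (x : ι → ZMod 2) :
    ∑ i ∈ s, x i = (#{i ∈ s | x i = 1} : ZMod 2) := by
  rw [← sum_boole]
  refine sum_congr rfl fun i _ => ?_
  generalize x i = a
  revert a; decide

theorem zmod_two_eq_zero_or_eq_one (a : ZMod 2) : a = 0 ∨ a = 1 := by
  revert a; decide

section Cover

variable {k : ℕ} [NeZero k]

def hyperplanePair (s : Finset (Fin k)) : Multiset (AffineSubspace F2 (Fin k → F2)) :=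
  {levelSet (coordSum s) 1, levelSet (coordSum (insert 0 s)) 1}

def pairCount (a b : F2) : ℕ :=
  (if b = 1 then 1 else 0) + if a + b = 1 then 1 else 0

theorem pairCount_one_left (b : F2) : pairCount 1 b = 1 := by
  revert b; decide

theorem pairCount_zero_left (b : F2) : pairCount 0 b = 2 * if b = 1 then 1 else 0 := by
  revert b; decide

theorem countP_mem_hyperplanePair (x : Fin k → F2) {s : Finset (Fin k)} (h0 : 0 ∉ s) :
    (hyperplanePair s).countP (x ∈ ·) = pairCount (x 0) (∑ i ∈ s, x i) := by
  rw [hyperplanePair, Multiset.insert_eq_cons, ← Multiset.cons_zero, Multiset.countP_cons,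
    Multiset.countP_cons, Multiset.countP_zero, zero_add, add_comm, pairCount]
  simp only [mem_levelSet, coordSum_apply, sum_insert h0]

theorem card_hyperplanePair (s : Finset (Fin k)) : Multiset.card (hyperplanePair s) = 2 :=
  rfl

variable (k) in
def cover : Multiset (AffineSubspace F2 (Fin k → F2)) :=
  Multiset.replicate (k - 4) (levelSet (coordSum {0}) 0) + hyperplanePair (univ.erase 0)
    + ∑ i ∈ univ.erase 0, hyperplanePair {i}

theorem card_cover (hk : 4 ≤ k) : Multiset.card (cover k) = 3 * k - 4 := by
  rw [cover, Multiset.card_add, Multiset.card_add, Multiset.card_replicate, Multiset.card_sum]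
  simp only [card_hyperplanePair, sum_const, smul_eq_mul, card_erase_of_mem (mem_univ _),
    card_univ, Fintype.card_fin]
  omega

theorem covCount_cover (x : Fin k → F2) :
    covCount k (cover k) x = (if x 0 = 0 then k - 4 else 0)
      + pairCount (x 0) (∑ i ∈ univ.erase 0, x i) + ∑ i ∈ univ.erase 0, pairCount (x 0) (x i) := by
  have hrep : (Multiset.replicate (k - 4) (levelSet (coordSum {0}) 0)).countP (x ∈ ·)
      = if x 0 = 0 then k - 4 else 0 := by
    rw [← Multiset.coe_replicate, Multiset.coe_countP, List.countP_replicate]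
    simp
  have hsingles : (∑ i ∈ univ.erase 0, hyperplanePair {i}).countP (x ∈ ·)
      = ∑ i ∈ univ.erase 0, pairCount (x 0) (x i) := by
    rw [← Multiset.coe_countPAddMonoidHom, map_sum]
    refine sum_congr rfl fun i hi => ?_
    rw [Multiset.coe_countPAddMonoidHom, countP_mem_hyperplanePair x
      (notMem_singleton.mpr (ne_of_mem_erase hi).symm), sum_singleton]
  rw [covCount, cover, Multiset.countP_add, Multiset.countP_add, hrep, hsingles,
    countP_mem_hyperplanePair x (notMem_erase 0 univ)]

theorem exists_levelSet_of_mem_cover (hk : 2 ≤ k) {S : AffineSubspace F2 (Fin k → F2)}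
    (hS : S ∈ cover k) : ∃ s : Finset (Fin k), s.Nonempty ∧ ∃ c, S = levelSet (coordSum s) c := by
  have hrest : (univ.erase (0 : Fin k)).Nonempty := by
    rw [← card_pos, card_erase_of_mem (mem_univ _), card_univ, Fintype.card_fin]
    omega
  simp only [cover, hyperplanePair, Multiset.mem_add, Multiset.mem_replicate, Multiset.mem_sum,
    Multiset.insert_eq_cons, Multiset.mem_cons, Multiset.mem_singleton] at hS
  rcases hS with ((⟨-, rfl⟩ | rfl | rfl) | ⟨i, -, rfl | rfl⟩)
  · exact ⟨_, singleton_nonempty 0, 0, rfl⟩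
  · exact ⟨_, hrest, 1, rfl⟩
  · exact ⟨_, insert_nonempty _ _, 1, rfl⟩
  · exact ⟨_, singleton_nonempty i, 1, rfl⟩
  · exact ⟨_, insert_nonempty _ _, 1, rfl⟩

theorem le_covCount_cover (hk : 4 ≤ k) {x : Fin k → F2} (hx : x ≠ 0) :
    k ≤ covCount k (cover k) x := by
  rw [covCount_cover]
  rcases zmod_two_eq_zero_or_eq_one (x 0) with h0 | h0
  · set w := #{i ∈ univ.erase 0 | x i = 1} with hw_def
    have hw : 1 ≤ w := by
      obtain ⟨i, hi⟩ := Function.ne_iff.mp hx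
      have hi1 : x i = 1 := (zmod_two_eq_zero_or_eq_one (x i)).resolve_left hi
      have hi0 : i ≠ 0 := by rintro rfl; exact hi h0
      exact card_pos.mpr ⟨i, mem_filter.mpr ⟨mem_erase.mpr ⟨hi0, mem_univ i⟩, hi1⟩⟩
    simp only [h0, if_true, pairCount_zero_left, ← mul_sum, ← card_filter,
      sum_zmod_two_eq_card_filter, ← hw_def]
    rcases hw.eq_or_lt with hw1 | hw2
    · simp only [← hw1, Nat.cast_one, if_true]
      omega
    · omega
  · simp only [h0, one_ne_zero, if_false, pairCount_one_left, sum_const, smul_eq_mul, mul_one,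
      card_erase_of_mem (mem_univ _), card_univ, Fintype.card_fin]
    omega

theorem isCover_cover (hk : 4 ≤ k) : IsCover k k 1 (cover k) := by
  refine ⟨fun S hS => ?_, fun x hx => le_covCount_cover hk hx, ?_⟩
  · obtain ⟨s, hs, c, rfl⟩ := exists_levelSet_of_mem_cover (by omega) hS
    refine ⟨levelSet_nonempty (coordSum_ne_zero hs) c, ?_⟩
    rw [finrank_direction_levelSet (coordSum_ne_zero hs), Module.finrank_fin_fun]
  · simp only [covCount_cover, Pi.zero_apply, if_true, pairCount, zero_ne_one, if_false,
      add_zero, sum_const_zero]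
    omega

end Cover

theorem stmt14 (k : ℕ) (hk : 4 ≤ k) :
    f k k 1 ≤ 3 * k - 4 := by
  have : NeZero k := ⟨by omega⟩
  exact Nat.sInf_le ⟨cover k, isCover_cover hk, card_cover hk⟩
end
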